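/- arXiv:2309.01228 — 5 statements merged into one kernel-verified Lean document; each statement's English description precedes it below -/
import Mathlib

section
/- Let X be a set of mutually noncollinear points (no three on a line... i.e., a cap) of size q−1, q, or q+1 in PG(2,q), q even, q ≥ 8. Then X is contained in at most one hyperoval of PG(2,q). -/
open Projectivization

/-- The set of points of `PG(n-1,F)` lying on a subspace `W`. -/
def pointsOn {F : Type*} [Field F] {n : ℕ} (W : Submodule F (Fin n → F)) :
    Set (Projectivization F (Fin n → F)) :=
  {p | p.submodule ≤ W}

/-- An arc of `PG(2,q)`: every line contains at most two of its points. -/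
def IsArc {F : Type*} [Field F] (X : Set (Projectivization F (Fin 3 → F))) : Prop :=
  ∀ W : Submodule F (Fin 3 → F), Module.finrank F W = 2 → (X ∩ pointsOn W).ncard ≤ 2

/-- A hyperoval of `PG(2,q)`: a set of `q+2` points, no three collinear. -/
def IsHyperoval {F : Type*} [Field F] (q : ℕ)
    (H : Set (Projectivization F (Fin 3 → F))) : Prop :=
  H.ncard = q + 2 ∧ IsArc H

/-!
Take `P ∈ H₁ \ H₂`. Every line through a point of a hyperoval is a secant: projecting the other
`q + 1` points from it hits each of the `q + 1` lines through it at most once, hence exactly once.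
So for `x ∈ X` the line `Px` meets `H₂` in a second point, which lies outside `X` because `Px`
already carries the two points `P`, `x` of the arc `H₁`; distinct `x` give distinct lines through
`P`, hence distinct second points. Thus `|X| ≤ |H₂ \ X| = q + 2 - |X|`, i.e.
`|X| ≤ q/2 + 1`, which is less than `q - 1` once `q > 4`.
-/

open Module Submodule
open scoped LinearAlgebra.Projectivization

namespace Projectivization

section DivisionRing

variable {K V : Type*} [DivisionRing K] [AddCommGroup V] [Module K V]

theorem submodule_le_iff_rep_mem {x : ℙ K V} {W : Submodule K V} :
    x.submodule ≤ W ↔ x.rep ∈ W := by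
  rw [submodule_eq, span_singleton_le_iff_mem]

theorem submodule_le_sup_iff_rep_mem_span {P x y : ℙ K V} :
    y.submodule ≤ P.submodule ⊔ x.submodule ↔ y.rep ∈ span K {x.rep, P.rep} := by
  rw [submodule_le_iff_rep_mem, span_insert, submodule_eq, submodule_eq, sup_comm]

theorem eq_of_submodule_le {x y : ℙ K V} (h : x.submodule ≤ y.submodule) : x = y :=
  submodule_injective (eq_of_le_of_finrank_eq h (by simp only [finrank_submodule]))

theorem submodule_le_sup_exchange {P x y : ℙ K V} (hyP : y ≠ P)
    (h : y.submodule ≤ P.submodule ⊔ x.submodule) :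
    x.submodule ≤ P.submodule ⊔ y.submodule := by
  rw [submodule_le_sup_iff_rep_mem_span] at h ⊢
  refine mem_span_insert_exchange h fun hy ↦ hyP (eq_of_submodule_le ?_)
  rwa [submodule_le_iff_rep_mem, submodule_eq]

theorem finrank_sup_submodule {x y : ℙ K V} (hxy : x ≠ y) :
    finrank K (x.submodule ⊔ y.submodule : Submodule K V) = 2 := by
  have hind := (independent_iff.1 ((independent_pair_iff_ne x y).2 hxy))
  rw [submodule_eq, submodule_eq, ← span_insert, ← Matrix.range_cons_cons_empty _ _ ![]]
  have hrep : Projectivization.rep ∘ ![x, y] = ![x.rep, y.rep] := by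
    ext i; fin_cases i <;> rfl
  rw [← hrep, finrank_span_eq_card hind, Fintype.card_fin]

theorem mem_sup_span_of_mk_mkQ_eq {p : Submodule K V} {a b : V} (ha : p.mkQ a ≠ 0)
    (hb : p.mkQ b ≠ 0) (h : mk K (p.mkQ a) ha = mk K (p.mkQ b) hb) : a ∈ p ⊔ K ∙ b := by
  obtain ⟨c, hc⟩ := (mk_eq_mk_iff' K _ _ ha hb).1 h
  have hdiff : a - c • b ∈ p := by
    rw [← p.ker_mkQ, LinearMap.mem_ker, map_sub, map_smul, hc, sub_self]
  simpa using
    add_mem (mem_sup_left hdiff) (mem_sup_right (smul_mem _ c (mem_span_singleton_self b)))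

theorem mkQ_rep_ne_zero {P x : ℙ K V} (hxP : x ≠ P) : P.submodule.mkQ x.rep ≠ 0 := by
  rw [Ne, ← LinearMap.mem_ker, ker_mkQ, ← submodule_le_iff_rep_mem]
  exact fun h ↦ hxP (eq_of_submodule_le h)

end DivisionRing

end Projectivization

theorem mem_pointsOn {F : Type*} [Field F] {n : ℕ} {W : Submodule F (Fin n → F)}
    {p : ℙ F (Fin n → F)} : p ∈ pointsOn W ↔ p.submodule ≤ W :=
  Iff.rfl

section Arc

variable {F : Type*} [Field F] [Finite F]

theorem IsArc.eq_of_submodule_le_sup {H : Set (ℙ F (Fin 3 → F))} (hH : IsArc H)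
    {P x y : ℙ F (Fin 3 → F)} (hP : P ∈ H) (hx : x ∈ H) (hy : y ∈ H) (hxP : x ≠ P)
    (hyP : y ≠ P) (h : y.submodule ≤ P.submodule ⊔ x.submodule) : y = x := by
  by_contra hyx
  have hthree : 2 < (H ∩ pointsOn (P.submodule ⊔ x.submodule)).ncard :=
    (Set.two_lt_ncard_iff).2 ⟨P, x, y, ⟨hP, mem_pointsOn.2 le_sup_left⟩,
      ⟨hx, mem_pointsOn.2 le_sup_right⟩, ⟨hy, h⟩, hxP.symm, hyP.symm, Ne.symm hyx⟩
  exact hthree.not_ge (hH _ (finrank_sup_submodule hxP.symm))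

theorem IsHyperoval.exists_ne_mem_pointsOn {H : Set (ℙ F (Fin 3 → F))}
    (hH : IsHyperoval (Nat.card F) H) {P : ℙ F (Fin 3 → F)} (hP : P ∈ H)
    {W : Submodule F (Fin 3 → F)} (hW : finrank F W = 2) (hPW : P ∈ pointsOn W) :
    ∃ y ∈ H, y ≠ P ∧ y ∈ pointsOn W := by
  let project (x : (H \ {P} : Set _)) : ℙ F ((Fin 3 → F) ⧸ P.submodule) :=
    mk F (P.submodule.mkQ x.1.rep) (mkQ_rep_ne_zero x.2.2)
  have hinj : Function.Injective project := by
    rintro ⟨x, hxH, hxP⟩ ⟨y, hyH, hyP⟩ hxy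
    have hx := mem_sup_span_of_mk_mkQ_eq _ _ hxy
    rw [← submodule_eq, ← submodule_le_iff_rep_mem] at hx
    exact Subtype.ext (hH.2.eq_of_submodule_le_sup hP hyH hxH hyP hxP hx)
  have hcard : Nat.card (ℙ F ((Fin 3 → F) ⧸ P.submodule)) ≤ Nat.card (H \ {P} : Set _) := by
    have hdim := P.submodule.finrank_quotient_add_finrank
    rw [finrank_submodule, finrank_fin_fun] at hdim
    rw [card_of_finrank_two F _ (by omega), Nat.card_coe_set_eq,
      Set.ncard_sdiff_singleton_of_mem hP, hH.1]
    omega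
  obtain ⟨w, hwW, hwP⟩ := SetLike.exists_of_lt (P.submodule.lt_of_le_of_finrank_lt_finrank hPW
    (by rw [finrank_submodule, hW]; norm_num))
  have hw : P.submodule.mkQ w ≠ 0 := by rwa [Ne, ← LinearMap.mem_ker, ker_mkQ]
  have : Finite ((Fin 3 → F) ⧸ P.submodule) := Module.finite_of_finite F
  obtain ⟨⟨y, hyH, hyP⟩, hy⟩ := (hinj.bijective_of_nat_card_le hcard).2 (mk F _ hw)
  refine ⟨y, hyH, hyP, submodule_le_iff_rep_mem.2 ?_⟩
  exact sup_le hPW ((span_singleton_le_iff_mem _ _).2 hwW) (mem_sup_span_of_mk_mkQ_eq _ _ hy)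

theorem IsHyperoval.two_mul_ncard_le_of_subset_inter {H₁ H₂ X : Set (ℙ F (Fin 3 → F))}
    (h₁ : IsHyperoval (Nat.card F) H₁) (h₂ : IsHyperoval (Nat.card F) H₂) (hne : H₁ ≠ H₂)
    (hX₁ : X ⊆ H₁) (hX₂ : X ⊆ H₂) : 2 * X.ncard ≤ Nat.card F + 2 := by
  obtain ⟨P, hP₁, hP₂⟩ : ∃ P ∈ H₁, P ∉ H₂ := Set.not_subset.1 fun hsub ↦
    hne (Set.eq_of_subset_of_ncard_le hsub (by rw [h₁.1, h₂.1]))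
  have hne_P {x} (hx : x ∈ H₂) : x ≠ P := fun h ↦ hP₂ (h ▸ hx)
  have hsecond (x : X) :
      ∃ y : (H₂ \ X : Set _), y.1.submodule ≤ P.submodule ⊔ x.1.submodule := by
    obtain ⟨y, hy₂, hyx, hyW⟩ := h₂.exists_ne_mem_pointsOn (hX₂ x.2)
      (finrank_sup_submodule (hne_P (hX₂ x.2)).symm) (mem_pointsOn.2 le_sup_right)
    refine ⟨⟨y, hy₂, fun hyX ↦ hyx ?_⟩, hyW⟩
    exact h₁.2.eq_of_submodule_le_sup hP₁ (hX₁ x.2) (hX₁ hyX) (hne_P (hX₂ x.2)) (hne_P hy₂)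
      hyW
  choose g hg using hsecond
  have hinj : Function.Injective g := by
    intro x₁ x₂ h
    have hx₂ : x₂.1.submodule ≤ P.submodule ⊔ x₁.1.submodule :=
      (submodule_le_sup_exchange (hne_P (g x₂).2.1) (hg x₂)).trans
        (sup_le le_sup_left (h ▸ hg x₁))
    exact Subtype.ext (h₁.2.eq_of_submodule_le_sup hP₁ (hX₁ x₁.2) (hX₁ x₂.2)
      (hne_P (hX₂ x₁.2)) (hne_P (hX₂ x₂.2)) hx₂).symm
  have hle : X.ncard ≤ (H₂ \ X).ncard := by
    simpa only [Nat.card_coe_set_eq] using Nat.card_le_card_of_injective g hinj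
  rw [Set.ncard_sdiff hX₂, h₂.1] at hle
  omega

end Arc

theorem arc_in_at_most_one_hyperoval_general
    (F : Type*) [Field F] [Fintype F] (q : ℕ) (hq : q = Fintype.card F)
    (hq8 : 8 ≤ q)
    (X H₁ H₂ : Set (Projectivization F (Fin 3 → F)))
    (hcard : X.ncard = q - 1 ∨ X.ncard = q ∨ X.ncard = q + 1)
    (h₁ : IsHyperoval q H₁) (h₂ : IsHyperoval q H₂)
    (hX₁ : X ⊆ H₁) (hX₂ : X ⊆ H₂) :
    H₁ = H₂ := by
  rw [hq, ← Nat.card_eq_fintype_card] at h₁ h₂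
  by_contra hne
  have hbound := h₁.two_mul_ncard_le_of_subset_inter h₂ hne hX₁ hX₂
  rw [Nat.card_eq_fintype_card, ← hq] at hbound
  omega

/-- An arc of size `q-1`, `q` or `q+1` in `PG(2,q)`, `q` even, `q ≥ 8`, is
contained in at most one hyperoval. -/
theorem arc_in_at_most_one_hyperoval
    (F : Type*) [Field F] [Fintype F] (q : ℕ) (hq : q = Fintype.card F)
    (hqeven : Even q) (hq8 : 8 ≤ q)
    (X H₁ H₂ : Set (Projectivization F (Fin 3 → F)))
    (hX : IsArc X) (hcard : X.ncard = q - 1 ∨ X.ncard = q ∨ X.ncard = q + 1)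
    (h₁ : IsHyperoval q H₁) (h₂ : IsHyperoval q H₂)
    (hX₁ : X ⊆ H₁) (hX₂ : X ⊆ H₂) :
    H₁ = H₂ :=
  arc_in_at_most_one_hyperoval_general F q hq hq8 X H₁ H₂ hcard h₁ h₂ hX₁ hX₂
end

section
/- In PG(2,q) with q even and q ≥ 8, if H is a regular hyperoval (an irreducible conic together with its nucleus), then there is a unique point p ∈ H such that H \ {p} is an irreducible conic. -/
open Projectivization

/-- An irreducible conic of `PG(2,q)`: the zero set of a quadratic form,
consisting of `q+1` points, no three collinear. -/
def IsConic {F : Type*} [Field F] (q : ℕ)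
    (C : Set (Projectivization F (Fin 3 → F))) : Prop :=
  (∃ Q : QuadraticForm F (Fin 3 → F), C = {p | Q p.rep = 0}) ∧
    C.ncard = q + 1 ∧ IsArc C

/-!
Two quadratic forms `Q`, `Q'` on `F³` that vanish at five points of an arc are proportional.
Pick two of the points `a`, `b`: the third point `⟨a + b⟩` of their line is off the arc, so
`Q' (a + b) ≠ 0` and some `Q - μ Q'` vanishes at `a + b` as well, hence on the whole line `ab`.
Writing `x = r c + u` with `u` on that line gives `(Q - μ Q') x = r · polar (Q - μ Q') x c`; the
linear form `polar (Q - μ Q') · c` vanishes at the remaining three points, which span `F³`, so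
`Q = μ Q'`. If `H \ {p}` and `H \ {p'}` were conics for `p ≠ p'`, they would share `q ≥ 5` points
of the arc `H`, hence coincide, although `p'` lies in one of them only.
-/

open scoped LinearAlgebra.Projectivization

namespace QuadraticMap

section CommRing

variable {R M N : Type*} [CommRing R] [AddCommGroup M] [Module R M] [AddCommGroup N] [Module R N]
  {Q : QuadraticMap R M N}

theorem map_eq_zero_of_mem_span_pair {a b x : M} (ha : Q a = 0) (hb : Q b = 0)
    (hab : Q (a + b) = 0) (hx : x ∈ Submodule.span R {a, b}) : Q x = 0 := by
  obtain ⟨s, t, rfl⟩ := Submodule.mem_span_pair.1 hx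
  have hpolar : polar Q a b = 0 := by rw [polar, ha, hb, hab, sub_zero, sub_zero]
  rw [QuadraticMap.map_add Q, Q.map_smul, Q.map_smul, polar_smul_left, polar_smul_right, ha, hb,
    hpolar]
  simp

theorem map_smul_add_eq_smul_polar {c u : M} (hc : Q c = 0) (hu : Q u = 0) (r : R) :
    Q (r • c + u) = r • polar Q (r • c + u) c := by
  rw [QuadraticMap.map_add Q, polar_add_left, Q.map_smul, polar_smul_left, polar_smul_left,
    polar_self, hc, hu, polar_comm]
  simp

end CommRing

open Submodule in
theorem eq_zero_of_map_eq_zero_of_linearIndependent {K V N : Type*} [Field K] [AddCommGroup V]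
    [Module K V] [AddCommGroup N] [Module K N] (hV : Module.finrank K V = 3)
    {Q : QuadraticMap K V N} {a b c d e : V}
    (hcab : LinearIndependent K ![c, a, b]) (hdab : LinearIndependent K ![d, a, b])
    (heab : LinearIndependent K ![e, a, b]) (hcde : LinearIndependent K ![c, d, e])
    (hQ : ∀ x ∈ ({a, b, c, d, e} : Set V), Q x = 0) (hab : Q (a + b) = 0) : Q = 0 := by
  simp only [Set.mem_insert_iff, Set.mem_singleton_iff, forall_eq_or_imp, forall_eq] at hQ
  obtain ⟨ha, hb, hc, hd, he⟩ := hQ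
  have : FiniteDimensional K V := Module.finite_of_finrank_eq_succ hV
  have span_eq_top {x y z : V} (h : LinearIndependent K ![x, y, z]) : span K {x, y, z} = ⊤ := by
    have := h.span_eq_top_of_card_eq_finrank' (by simp [hV])
    rwa [Matrix.range_cons, Matrix.range_cons_cons_empty, Set.singleton_union] at this
  have notMem_span {x : V} (h : LinearIndependent K ![x, a, b]) : x ∉ span K {a, b} := by
    have := (linearIndependent_finCons.1 h).2
    rwa [Matrix.range_cons_cons_empty] at this
  have key (x : V) : ∃ r : K, x - r • c ∈ span K {a, b} ∧ Q x = r • polar Q x c := by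
    obtain ⟨r, u, hu, rfl⟩ := mem_span_insert.1 (span_eq_top hcab ▸ mem_top : x ∈ _)
    exact ⟨r, by simpa using hu,
      map_smul_add_eq_smul_polar hc (map_eq_zero_of_mem_span_pair ha hb hab hu) r⟩
  have polar_eq_zero {x : V} (hx : x ∉ span K {a, b}) (hQx : Q x = 0) : polar Q x c = 0 := by
    obtain ⟨r, hr, hQ⟩ := key x
    have hr0 : r ≠ 0 := by rintro rfl; exact hx (by simpa using hr)
    exact (smul_eq_zero.1 (hQ ▸ hQx)).resolve_left hr0
  have hker : span K {c, d, e} ≤ LinearMap.ker ((polarBilin Q).flip c) := by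
    rw [span_le]
    rintro x (rfl | rfl | rfl)
    · simp [polar_self, hc]
    · simpa using polar_eq_zero (notMem_span hdab) hd
    · simpa using polar_eq_zero (notMem_span heab) he
  ext x
  obtain ⟨r, -, hQx⟩ := key x
  have : polar Q x c = 0 := hker (span_eq_top hcde ▸ mem_top)
  rw [hQx, this, smul_zero, zero_apply]

theorem map_rep_mk_eq_zero_iff {K V N : Type*} [Field K] [AddCommGroup V] [Module K V]
    [AddCommGroup N] [Module K N] (Q : QuadraticMap K V N) {v : V} (hv : v ≠ 0) :
    Q (Projectivization.mk K v hv).rep = 0 ↔ Q v = 0 := by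
  obtain ⟨u, hu⟩ := exists_smul_eq_mk_rep K v hv
  rw [← hu, Units.smul_def, Q.map_smul, smul_eq_zero, mul_self_eq_zero]
  simp

end QuadraticMap

theorem QuadraticForm.exists_eq_smul_of_map_eq_zero_of_linearIndependent {K V : Type*} [Field K]
    [AddCommGroup V] [Module K V] (hV : Module.finrank K V = 3) {Q Q' : QuadraticForm K V}
    {a b c d e : V}
    (hcab : LinearIndependent K ![c, a, b]) (hdab : LinearIndependent K ![d, a, b])
    (heab : LinearIndependent K ![e, a, b]) (hcde : LinearIndependent K ![c, d, e])
    (hQ : ∀ x ∈ ({a, b, c, d, e} : Set V), Q x = 0)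
    (hQ' : ∀ x ∈ ({a, b, c, d, e} : Set V), Q' x = 0) (hQ'ab : Q' (a + b) ≠ 0) :
    ∃ μ : K, Q = μ • Q' := by
  refine ⟨Q (a + b) / Q' (a + b), sub_eq_zero.1 ?_⟩
  refine QuadraticMap.eq_zero_of_map_eq_zero_of_linearIndependent hV hcab hdab heab hcde
    (fun x hx => ?_) ?_
  · simp [hQ x hx, hQ' x hx]
  · simp [hQ'ab]

namespace Projectivization

variable {K V : Type*} [DivisionRing K] [AddCommGroup V] [Module K V]

theorem linearIndependent_rep_pair {a b : ℙ K V} (hab : a ≠ b) :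
    LinearIndependent K ![a.rep, b.rep] := by
  have := independent_iff.1 ((independent_pair_iff_ne a b).2 hab)
  rwa [show (Projectivization.rep ∘ ![a, b]) = ![a.rep, b.rep] by ext i; fin_cases i <;> rfl]
    at this

theorem rep_add_rep_ne_zero {a b : ℙ K V} (hab : a ≠ b) : a.rep + b.rep ≠ 0 := fun h =>
  one_ne_zero (LinearIndependent.pair_iff.1 (linearIndependent_rep_pair hab) 1 1
    (by rwa [one_smul, one_smul])).1

theorem mk_rep_add_rep_ne_left {a b : ℙ K V} (hab : a ≠ b) (h : a.rep + b.rep ≠ 0) :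
    mk K (a.rep + b.rep) h ≠ a := by
  intro ha
  obtain ⟨t, ht⟩ := (mk_eq_mk_iff' K _ _ h a.rep_nonzero).1 (ha.trans a.mk_rep.symm)
  have := LinearIndependent.pair_iff.1 (linearIndependent_rep_pair hab) (t - 1) (-1)
    (by rw [sub_smul, ht, one_smul, neg_one_smul]; abel)
  exact one_ne_zero (neg_eq_zero.1 this.2)

end Projectivization

theorem Set.exists_injective_fin_of_le_ncard {α : Type*} {s : Set α} {n : ℕ} (hs : s.Finite)
    (h : n ≤ s.ncard) : ∃ v : Fin n → α, Function.Injective v ∧ ∀ i, v i ∈ s := by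
  have : Fintype s := hs.fintype
  obtain ⟨v⟩ : Nonempty (Fin n ↪ s) := Function.Embedding.nonempty_of_card_le <| by
    rwa [Fintype.card_fin, ← Nat.card_eq_fintype_card, Nat.card_coe_set_eq]
  exact ⟨fun i => v i, Subtype.val_injective.comp v.injective, fun i => (v i).2⟩

section Arc

open Projectivization Submodule

variable {F : Type*} [Field F]

theorem mem_pointsOn_iff {n : ℕ} {W : Submodule F (Fin n → F)} {p : ℙ F (Fin n → F)} :
    p ∈ pointsOn W ↔ p.rep ∈ W := by
  show p.submodule ≤ W ↔ _
  rw [submodule_eq, span_singleton_le_iff_mem]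

theorem IsArc.rep_notMem_span_pair {X : Set (ℙ F (Fin 3 → F))} (harc : IsArc X) (hX : X.Finite)
    {x y z : ℙ F (Fin 3 → F)} (hx : x ∈ X) (hy : y ∈ X) (hz : z ∈ X)
    (hxy : x ≠ y) (hzx : z ≠ x) (hzy : z ≠ y) : z.rep ∉ span F {x.rep, y.rep} := by
  intro hmem
  have hrank : Module.finrank F (span F {x.rep, y.rep}) = 2 := by
    rw [← Matrix.range_cons_cons_empty x.rep y.rep ![]]
    simpa using finrank_span_eq_card (linearIndependent_rep_pair hxy)
  have hsub : ({z, x, y} : Set _) ⊆ X ∩ pointsOn (span F {x.rep, y.rep}) := by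
    rintro w (rfl | rfl | rfl)
    · exact ⟨hz, mem_pointsOn_iff.2 hmem⟩
    · exact ⟨hx, mem_pointsOn_iff.2 (subset_span (by simp))⟩
    · exact ⟨hy, mem_pointsOn_iff.2 (subset_span (by simp))⟩
  have h3 : ({z, x, y} : Set _).ncard = 3 := Set.ncard_eq_three.2 ⟨z, x, y, hzx, hzy, hxy, rfl⟩
  have := (Set.ncard_le_ncard hsub (hX.inter_of_left _)).trans (harc _ hrank)
  omega

theorem IsArc.linearIndependent_rep {X : Set (ℙ F (Fin 3 → F))} (harc : IsArc X) (hX : X.Finite)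
    {x y z : ℙ F (Fin 3 → F)} (hx : x ∈ X) (hy : y ∈ X) (hz : z ∈ X)
    (hxy : x ≠ y) (hxz : x ≠ z) (hyz : y ≠ z) : LinearIndependent F ![x.rep, y.rep, z.rep] :=
  linearIndependent_finCons.2 ⟨linearIndependent_rep_pair hyz, by
    rw [Matrix.range_cons_cons_empty]
    exact harc.rep_notMem_span_pair hX hy hz hx hyz hxy hxz⟩

theorem IsArc.mk_rep_add_rep_notMem {X : Set (ℙ F (Fin 3 → F))} (harc : IsArc X)
    (hX : X.Finite) {a b : ℙ F (Fin 3 → F)} (ha : a ∈ X) (hb : b ∈ X) (hab : a ≠ b)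
    (h : a.rep + b.rep ≠ 0) : mk F (a.rep + b.rep) h ∉ X := by
  intro hf
  refine harc.rep_notMem_span_pair hX ha hb hf hab (mk_rep_add_rep_ne_left hab h) ?_ ?_
  · simpa only [add_comm] using mk_rep_add_rep_ne_left hab.symm (by rwa [add_comm])
  · obtain ⟨u, hu⟩ := exists_smul_eq_mk_rep F _ h
    rw [← hu, Units.smul_def, smul_add]
    exact add_mem (smul_mem _ _ (subset_span (by simp))) (smul_mem _ _ (subset_span (by simp)))

theorem IsArc.eq_of_five_le_ncard_inter {X C C' : Set (ℙ F (Fin 3 → F))}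
    (harc : IsArc X) (hX : X.Finite) (hCX : C ⊆ X) (hC'X : C' ⊆ X)
    (hC : ∃ Q : QuadraticForm F (Fin 3 → F), C = {p | Q p.rep = 0})
    (hC' : ∃ Q' : QuadraticForm F (Fin 3 → F), C' = {p | Q' p.rep = 0})
    (h5 : 5 ≤ (C ∩ C').ncard) : C = C' := by
  obtain ⟨Q, rfl⟩ := hC
  obtain ⟨Q', rfl⟩ := hC'
  obtain ⟨v, hv_inj, hv⟩ := Set.exists_injective_fin_of_le_ncard
    (hX.subset (Set.inter_subset_left.trans hCX)) h5
  have hvX (i : Fin 5) : v i ∈ X := hCX (hv i).1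
  have hli (i j k : Fin 5) (hij : i ≠ j) (hik : i ≠ k) (hjk : j ≠ k) :
      LinearIndependent F ![(v i).rep, (v j).rep, (v k).rep] :=
    harc.linearIndependent_rep hX (hvX i) (hvX j) (hvX k) (hv_inj.ne hij) (hv_inj.ne hik)
      (hv_inj.ne hjk)
  have hv01 : v 0 ≠ v 1 := hv_inj.ne (by decide)
  have hsum := rep_add_rep_ne_zero hv01
  have hthird := harc.mk_rep_add_rep_notMem hX (hvX 0) (hvX 1) hv01 hsum
  have hQ0 : Q ((v 0).rep + (v 1).rep) ≠ 0 := fun h =>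
    hthird (hCX ((Q.map_rep_mk_eq_zero_iff hsum).2 h))
  have hQ'0 : Q' ((v 0).rep + (v 1).rep) ≠ 0 := fun h =>
    hthird (hC'X ((Q'.map_rep_mk_eq_zero_iff hsum).2 h))
  have hvanish : ∀ x ∈ ({(v 0).rep, (v 1).rep, (v 2).rep, (v 3).rep, (v 4).rep} : Set _),
      Q x = 0 ∧ Q' x = 0 := by
    rintro x (rfl | rfl | rfl | rfl | rfl) <;> exact hv _
  obtain ⟨μ, rfl⟩ := QuadraticForm.exists_eq_smul_of_map_eq_zero_of_linearIndependent
    (Module.finrank_fin_fun F) (hli 2 0 1 (by decide) (by decide) (by decide))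
    (hli 3 0 1 (by decide) (by decide) (by decide)) (hli 4 0 1 (by decide) (by decide) (by decide))
    (hli 2 3 4 (by decide) (by decide) (by decide)) (fun x hx => (hvanish x hx).1)
    (fun x hx => (hvanish x hx).2) hQ'0
  have hμ : μ ≠ 0 := by rintro rfl; exact hQ0 (by simp)
  ext p
  simp [hμ]

end Arc

theorem regular_hyperoval_unique_conic_point_general
    (F : Type*) [Field F] (q : ℕ) (hq8 : 8 ≤ q)
    (H : Set (Projectivization F (Fin 3 → F))) (hH : IsHyperoval q H)
    (hreg : ∃ p ∈ H, IsConic q (H \ {p})) :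
    ∃! p, p ∈ H ∧ IsConic q (H \ {p}) := by
  have hHfin : H.Finite := Set.finite_of_ncard_ne_zero (by rw [hH.1]; omega)
  obtain ⟨p, hp, hC⟩ := hreg
  refine ⟨p, ⟨hp, hC⟩, fun p' ⟨hp', hC'⟩ => by_contra fun hne => ?_⟩
  have hcommon : 5 ≤ (H \ {p} ∩ (H \ {p'})).ncard := by
    have h₁ := hH.1 ▸ Set.pred_ncard_le_ncard_sdiff_singleton H p
    have h₂ := Set.pred_ncard_le_ncard_sdiff_singleton (H \ {p}) p'
    rw [Set.sdiff_inter_sdiff, ← Set.sdiff_sdiff]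
    omega
  have hCC' : H \ {p} = H \ {p'} := IsArc.eq_of_five_le_ncard_inter hH.2 hHfin Set.sdiff_subset
    Set.sdiff_subset hC.1 hC'.1 hcommon
  have : p' ∈ H \ {p'} := hCC' ▸ ⟨hp', hne⟩
  exact this.2 rfl

/-- If `H` is a regular hyperoval of `PG(2,q)`, `q` even, `q ≥ 8` (a conic plus
its nucleus), then there is a unique point `p ∈ H` with `H \ {p}` a conic. -/
theorem regular_hyperoval_unique_conic_point
    (F : Type*) [Field F] [Fintype F] (q : ℕ) (hq : q = Fintype.card F)
    (hqeven : Even q) (hq8 : 8 ≤ q)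
    (H : Set (Projectivization F (Fin 3 → F))) (hH : IsHyperoval q H)
    (hreg : ∃ p ∈ H, IsConic q (H \ {p})) :
    ∃! p, p ∈ H ∧ IsConic q (H \ {p}) :=
  regular_hyperoval_unique_conic_point_general F q hq8 H hH hreg
end

section
/- Let q be even, δ ∈ GF(q) with Tr(δ) = 1, and b₁, b₂ ∈ GF(q)* distinct with Tr(b₁) = Tr(b₂) = 0. Then there is no A ∈ GL(4, GF(q)) whose induced substitution of variables maps the quadratic form X₁X₂ + X₃² + X₃X₄ + δX₄² to itself and simultaneously maps X₁X₂ + X₃² + X₃X₄ + (δ+b₁)X₄² to X₁X₂ + X₃² + X₃X₄ + (δ+b₂)X₄². -/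
open MvPolynomial

/-- Absolute trace of `GF(2^h)`. -/
def absTrace {F : Type*} [Field F] (h : ℕ) (x : F) : F :=
  ∑ i ∈ Finset.range h, x ^ (2 ^ i)

/-- The substitution of variables `φ_A` induced by a matrix `A`. -/
noncomputable def substMat {F : Type*} [Field F] (A : Matrix (Fin 4) (Fin 4) F)
    (f : MvPolynomial (Fin 4) F) : MvPolynomial (Fin 4) F :=
  MvPolynomial.aeval (fun i => ∑ j, MvPolynomial.C (A i j) * MvPolynomial.X j) f

/-- The quadratic form `X₁X₂ + X₃² + X₃X₄ + δX₄²` (indices shifted to 0–3). -/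
noncomputable def ellForm {F : Type*} [Field F] (δ : F) : MvPolynomial (Fin 4) F :=
  X 0 * X 1 + X 2 ^ 2 + X 2 * X 3 + C δ * X 3 ^ 2

lemma coeff_XX {F : Type*} [CommSemiring F] {n : ℕ} (i j k l : Fin n) :
    coeff (Finsupp.single i 1 + Finsupp.single j 1) (X k * X l : MvPolynomial (Fin n) F) =
    if (k = i ∧ l = j) ∨ (k = j ∧ l = i) then 1 else 0 := by
  have hX : (X k * X l : MvPolynomial (Fin n) F)
      = monomial (Finsupp.single k 1 + Finsupp.single l 1) 1 := by
    rw [show (X k : MvPolynomial (Fin n) F) = X k ^ 1 from (pow_one _).symm,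
        show (X l : MvPolynomial (Fin n) F) = X l ^ 1 from (pow_one _).symm,
        X_pow_eq_monomial, X_pow_eq_monomial, monomial_mul, mul_one]
  rw [hX, coeff_monomial]
  simp [Finsupp.single_add_single_eq_single_add_single one_ne_zero one_ne_zero]

lemma coeff_term {F : Type*} [CommSemiring F] {n : ℕ} (a b : F) (i j k l : Fin n) :
    coeff (Finsupp.single i 1 + Finsupp.single j 1)
      ((C a * X k) * (C b * X l) : MvPolynomial (Fin n) F) =
    if (k = i ∧ l = j) ∨ (k = j ∧ l = i) then a * b else 0 := by
  rw [mul_mul_mul_comm, ← C_mul, coeff_C_mul, coeff_XX]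
  split <;> simp

/-- The linear form with coefficient vector `u`. -/
noncomputable def lin {F : Type*} [Field F] (u : Fin 4 → F) : MvPolynomial (Fin 4) F :=
  C (u 0) * X 0 + C (u 1) * X 1 + C (u 2) * X 2 + C (u 3) * X 3

lemma coeff_lin01 {F : Type*} [Field F] (u v : Fin 4 → F) :
    coeff (Finsupp.single 0 1 + Finsupp.single 1 1) (lin u * lin v) =
    u 0 * v 1 + u 1 * v 0 := by
  simp only [lin, mul_add, add_mul, coeff_add, coeff_term]
  simp (config := { decide := true })
  ring

lemma coeff_lin02 {F : Type*} [Field F] (u v : Fin 4 → F) :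
    coeff (Finsupp.single 0 1 + Finsupp.single 2 1) (lin u * lin v) =
    u 0 * v 2 + u 2 * v 0 := by
  simp only [lin, mul_add, add_mul, coeff_add, coeff_term]
  simp (config := { decide := true })
  ring

lemma coeff_lin12 {F : Type*} [Field F] (u v : Fin 4 → F) :
    coeff (Finsupp.single 1 1 + Finsupp.single 2 1) (lin u * lin v) =
    u 1 * v 2 + u 2 * v 1 := by
  simp only [lin, mul_add, add_mul, coeff_add, coeff_term]
  simp (config := { decide := true })
  ring

lemma coeff_lin23 {F : Type*} [Field F] (u v : Fin 4 → F) :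
    coeff (Finsupp.single 2 1 + Finsupp.single 3 1) (lin u * lin v) =
    u 2 * v 3 + u 3 * v 2 := by
  simp only [lin, mul_add, add_mul, coeff_add, coeff_term]
  simp (config := { decide := true })
  ring

lemma coeff_lin_diag {F : Type*} [Field F] (u v : Fin 4 → F) (i : Fin 4) :
    coeff (Finsupp.single i 1 + Finsupp.single i 1) (lin u * lin v) = u i * v i := by
  fin_cases i <;>
  · simp only [lin, mul_add, add_mul, coeff_add, coeff_term]
    simp (config := { decide := true })

lemma substMat_ellForm {F : Type*} [Field F] (A : Matrix (Fin 4) (Fin 4) F) (δ : F) :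
    substMat A (ellForm δ) =
      lin (A 0) * lin (A 1) + lin (A 2) * lin (A 2) + lin (A 2) * lin (A 3)
        + C δ * (lin (A 3) * lin (A 3)) := by
  simp [substMat, ellForm, lin, Fin.sum_univ_four]
  ring

/-- For `Tr(δ) = 1` and distinct nonzero `b₁, b₂` of trace `0`, no invertible
linear substitution fixes `X₁X₂+X₃²+X₃X₄+δX₄²` while mapping
`X₁X₂+X₃²+X₃X₄+(δ+b₁)X₄²` to `X₁X₂+X₃²+X₃X₄+(δ+b₂)X₄²`. -/
theorem no_substitution_between_forms
    (F : Type*) [Field F] [Fintype F] (h : ℕ) (hh : 1 ≤ h)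
    (hcard : Fintype.card F = 2 ^ h)
    (δ b₁ b₂ : F) (hδ : absTrace h δ = 1)
    (hb₁ : b₁ ≠ 0) (hb₂ : b₂ ≠ 0) (hne : b₁ ≠ b₂)
    (ht₁ : absTrace h b₁ = 0) (ht₂ : absTrace h b₂ = 0) :
    ¬ ∃ A : Matrix (Fin 4) (Fin 4) F, IsUnit A ∧
      substMat A (ellForm δ) = ellForm δ ∧
      substMat A (ellForm (δ + b₁)) = ellForm (δ + b₂) := by
  rintro ⟨A, -, h1, h2⟩
  -- characteristic two
  have two : (2 : F) = 0 := by
    have hc0 : ((Fintype.card F : ℕ) : F) = 0 := FiniteField.cast_card_eq_zero F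
    rw [hcard] at hc0
    push_cast at hc0
    exact pow_eq_zero_iff (by omega) |>.mp hc0
  rw [substMat_ellForm] at h1 h2
  -- the key relation coming from subtracting the two hypotheses
  have hK : C b₁ * (lin (A 3) * lin (A 3)) = C b₂ * (X 3 * X 3 : MvPolynomial (Fin 4) F) := by
    simp only [ellForm, C_add] at h1 h2
    linear_combination h2 - h1
  -- extract the entries of the last row of A
  have K0 := congrArg (coeff (Finsupp.single (0 : Fin 4) 1 + Finsupp.single 0 1)) hK
  have K1 := congrArg (coeff (Finsupp.single (1 : Fin 4) 1 + Finsupp.single 1 1)) hK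
  have K2 := congrArg (coeff (Finsupp.single (2 : Fin 4) 1 + Finsupp.single 2 1)) hK
  have K3 := congrArg (coeff (Finsupp.single (3 : Fin 4) 1 + Finsupp.single 3 1)) hK
  simp only [coeff_C_mul, coeff_lin_diag, coeff_XX] at K0 K1 K2 K3
  simp (config := { decide := true }) at K0 K1 K2 K3
  have he0 : A 3 0 = 0 := K0.resolve_left hb₁
  have he1 : A 3 1 = 0 := K1.resolve_left hb₁
  have he2 : A 3 2 = 0 := K2.resolve_left hb₁
  -- extract coefficient equations from the fixed form
  have E5 := congrArg (coeff (Finsupp.single (0 : Fin 4) 1 + Finsupp.single 1 1)) h1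
  have E6 := congrArg (coeff (Finsupp.single (0 : Fin 4) 1 + Finsupp.single 2 1)) h1
  have E7 := congrArg (coeff (Finsupp.single (1 : Fin 4) 1 + Finsupp.single 2 1)) h1
  have E3 := congrArg (coeff (Finsupp.single (2 : Fin 4) 1 + Finsupp.single 2 1)) h1
  have E9 := congrArg (coeff (Finsupp.single (2 : Fin 4) 1 + Finsupp.single 3 1)) h1
  simp only [ellForm, pow_two, coeff_add, coeff_C_mul, coeff_lin01, coeff_lin02,
    coeff_lin12, coeff_lin23, coeff_lin_diag, coeff_XX] at E5 E6 E7 E3 E9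
  simp (config := { decide := true }) [he0, he1, he2] at E5 E6 E7 E3 E9
  -- now do the algebra
  have hb2 : A 1 2 = 0 := by
    linear_combination (-(A 1 2))*E5 + (A 1 1)*E6 + (A 1 0)*E7 +
      (A 2 0*A 2 1*A 1 2 - A 0 2*A 1 0*A 1 1 - A 2 0*A 2 2*A 1 1 - A 2 1*A 2 2*A 1 0)*two
  have ha2 : A 0 2 = 0 := by
    linear_combination (-(A 0 2))*E5 + (A 0 1)*E6 + (A 0 0)*E7 -
      (A 0 0*A 0 1*A 1 2 - A 0 2*A 2 0*A 2 1 + A 0 1*A 2 0*A 2 2 + A 0 0*A 2 1*A 2 2)*two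
  have hd2sq : (A 2 2 - 1)^2 = 0 := by
    linear_combination E3 - (A 1 2)*ha2 + (1 - A 2 2)*two
  have hd2 : A 2 2 = 1 := by
    have := pow_eq_zero_iff (n := 2) (by norm_num) |>.mp hd2sq
    exact sub_eq_zero.mp this
  have hc : A 3 3 = 1 := by
    linear_combination E9 - (A 1 3)*ha2 - (A 0 3)*hb2 - (A 3 3)*hd2 - (A 2 2 * A 2 3)*two
  rw [hc] at K3
  exact hne (by linear_combination K3)
end

section
/- Let q be even, δ ∈ GF(q) with Tr(δ) = 1, and b₁, b₂ ∈ GF(q)* distinct with Tr(b₁) = Tr(b₂) = 0. Then there is no A ∈ GL(4, GF(q)) and no μ₁, μ₂ ∈ GF(q)* such that φ_A maps X₁X₂ + X₃² + X₃X₄ + δX₄² to μ₁·(X₁X₂ + X₃² + X₃X₄ + δX₄²) and X₁X₂ + X₃² + X₃X₄ + (δ+b₁)X₄² to μ₂·(X₁X₂ + X₃² + X₃X₄ + (δ+b₂)X₄²). -/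
open MvPolynomial

/-!
Write `Q_c` for the form `X₁X₂ + X₃² + X₃X₄ + cX₄²`. Comparing the two hypotheses, `b₁ L²`
(with `L` the fourth coordinate of `A x`) equals `(μ₂ - μ₁) Q_δ + μ₂ b₂ X₄²`; testing this on
vectors with `X₄ = 0` forces `μ₂ = μ₁`, and then `A` carries `Q_{δ + s b₁}` to
`μ₁ Q_{δ + s b₂}` for every `s`. A similarity preserves the number of zeros, and `Q_c` has
`q²(q - 1) + q` zeros if `T² + T + c` has no root in `GF(q)`, and more otherwise. In
characteristic `2` the values `t² + t` form an additive subgroup of index `2`, so some `s`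
puts exactly one of `δ + s b₁`, `δ + s b₂` in it, which is impossible.
-/

open scoped Matrix

section Forms

variable {F : Type*} [Field F]

def ellFun (c : F) (x : Fin 4 → F) : F := x 0 * x 1 + x 2 ^ 2 + x 2 * x 3 + c * x 3 ^ 2

def binForm (c : F) (z : F × F) : F := z.1 ^ 2 + z.1 * z.2 + c * z.2 ^ 2

lemma eval_substMat (A : Matrix (Fin 4) (Fin 4) F) (f : MvPolynomial (Fin 4) F)
    (x : Fin 4 → F) : eval x (substMat A f) = eval (A *ᵥ x) f := by
  induction f using MvPolynomial.induction_on with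
  | C a => simp [substMat]
  | add p q hp hq => simp only [substMat, map_add] at *; rw [hp, hq]
  | mul_X p i hp =>
    simp only [substMat, map_mul] at *
    rw [hp]
    simp [Matrix.mulVec, dotProduct]

lemma eval_ellForm (c : F) (x : Fin 4 → F) : eval x (ellForm c) = ellFun c x := by
  simp [ellForm, ellFun]

lemma ellFun_add (c d : F) (x : Fin 4 → F) : ellFun (c + d) x = ellFun c x + d * x 3 ^ 2 := by
  simp only [ellFun]; ring

lemma ellFun_mulVec_of_substMat_eq {A : Matrix (Fin 4) (Fin 4) F} {c c' μ : F}
    (h : substMat A (ellForm c) = C μ * ellForm c') (x : Fin 4 → F) :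
    ellFun c (A *ᵥ x) = μ * ellFun c' x := by
  simpa [eval_substMat, eval_ellForm] using congrArg (eval x) h

lemma eq_zero_of_forall_mul_sq_mulVec_eq {A : Matrix (Fin 4) (Fin 4) F} {b α β δ : F}
    (h : ∀ x, b * (A *ᵥ x) 3 ^ 2 = α * ellFun δ x + β * x 3 ^ 2) : α = 0 := by
  -- On `e₁`, `e₂`, `e₁ + e₂` the right side is `0`, `0`, `α`; with `L x = (A *ᵥ x) 3`,
  -- `b L(e₁)² = 0` forces `b L(e₁) = 0`, so the left side on `e₁ + e₂` vanishes too.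
  have h₁ := h ![1, 0, 0, 0]
  have h₂ := h ![0, 1, 0, 0]
  have h₁₂ := h ![1, 1, 0, 0]
  simp [Matrix.mulVec, dotProduct, Fin.sum_univ_four, ellFun, -mul_eq_zero] at h₁ h₂ h₁₂
  have hb : b * A 3 0 = 0 := pow_eq_zero_iff two_ne_zero |>.mp (by linear_combination b * h₁)
  linear_combination -h₁₂ + h₁ + h₂ + 2 * A 3 1 * hb

lemma ellFun_pencil {A : Matrix (Fin 4) (Fin 4) F} {δ b₁ b₂ μ₁ μ₂ : F}
    (h₁ : ∀ x, ellFun δ (A *ᵥ x) = μ₁ * ellFun δ x)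
    (h₂ : ∀ x, ellFun (δ + b₁) (A *ᵥ x) = μ₂ * ellFun (δ + b₂) x) (s : F) (x : Fin 4 → F) :
    ellFun (δ + s * b₁) (A *ᵥ x) = μ₁ * ellFun (δ + s * b₂) x := by
  have hdiff : ∀ x, b₁ * (A *ᵥ x) 3 ^ 2 = (μ₂ - μ₁) * ellFun δ x + μ₂ * b₂ * x 3 ^ 2 := by
    intro x
    have := h₂ x
    rw [ellFun_add, ellFun_add] at this
    linear_combination this - h₁ x
  have hμ := eq_zero_of_forall_mul_sq_mulVec_eq hdiff
  rw [ellFun_add, ellFun_add]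
  linear_combination h₁ x + s * hdiff x + s * (ellFun δ x + b₂ * x 3 ^ 2) * hμ

lemma card_zeros_eq_of_forall_eq_mul {α β : Type*} {f : β → F} {g : α → F} {φ : α → β}
    (hφ : Function.Bijective φ) {μ : F} (hμ : μ ≠ 0) (hfg : ∀ x, f (φ x) = μ * g x) :
    Nat.card {y // f y = 0} = Nat.card {x // g x = 0} :=
  Nat.card_congr ((Equiv.ofBijective φ hφ).subtypeEquiv fun x => by simp [hfg, hμ]).symm

lemma card_binForm_zeros_eq_one_iff (c : F) :
    Nat.card {z : F × F // binForm c z = 0} = 1 ↔ ¬ ∃ t : F, t ^ 2 + t + c = 0 := by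
  rw [Nat.card_eq_one_iff_exists]
  constructor
  · rintro ⟨z₀, hz₀⟩ ⟨t, ht⟩
    have h₁ := hz₀ ⟨(t, 1), by simpa [binForm] using ht⟩
    have h₀ := hz₀ ⟨(0, 0), by simp [binForm]⟩
    simpa using congrArg (fun z => z.1.2) (h₁.trans h₀.symm)
  · intro hc
    refine ⟨⟨(0, 0), by simp [binForm]⟩, fun ⟨(u, v), huv⟩ => ?_⟩
    simp only [binForm] at huv
    by_cases hv : v = 0
    · obtain rfl : u = 0 := by simpa [hv] using huv
      simp [hv]
    · refine absurd ⟨u / v, ?_⟩ hc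
      field_simp
      linear_combination huv

variable [Fintype F]

lemma sum_sum_mul_add_eq_zero [DecidableEq F] (s : F) :
    ∑ b : F, ∑ a : F, (if a * b + s = 0 then 1 else 0 : ℕ) =
      (Fintype.card F - 1) + if s = 0 then Fintype.card F else 0 := by
  rw [← Finset.add_sum_erase _ _ (Finset.mem_univ 0), add_comm]
  congr 1
  · have hunit : ∀ b ∈ Finset.univ.erase (0 : F),
        ∑ a : F, (if a * b + s = 0 then 1 else 0 : ℕ) = 1 := by
      intro b hb
      simp_rw [← eq_neg_iff_add_eq_zero, ← eq_div_iff (Finset.ne_of_mem_erase hb)]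
      simp
    rw [Finset.sum_congr rfl hunit]
    simp
  · split_ifs with hs <;> simp [hs]

lemma card_ellFun_zeros (c : F) :
    Nat.card {x : Fin 4 → F // ellFun c x = 0} =
      Fintype.card F ^ 2 * (Fintype.card F - 1) +
        Fintype.card F * Nat.card {z : F × F // binForm c z = 0} := by
  classical
  let e : (F × F) × F × F ≃ (Fin 4 → F) :=
    { toFun := fun p => ![p.2.2, p.2.1, p.1.1, p.1.2]
      invFun := fun x => ((x 2, x 3), x 1, x 0)
      left_inv := fun _ => rfl
      right_inv := fun x => by ext i; fin_cases i <;> rfl }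
  have he : ∀ p, ellFun c (e p) = p.2.2 * p.2.1 + binForm c p.1 := by
    rintro ⟨⟨u, v⟩, b, a⟩
    show ellFun c ![a, b, u, v] = _
    simp [ellFun, binForm]
    ring
  rw [← Nat.card_congr (e.subtypeEquiv fun p => Iff.rfl), Nat.card_eq_fintype_card,
    Nat.card_eq_fintype_card, Fintype.card_subtype, Fintype.card_subtype, Finset.card_filter,
    Finset.card_filter, Fintype.sum_prod_type]
  simp only [he]
  rw [Finset.sum_congr rfl fun z _ =>
    (Fintype.sum_prod_type _).trans (sum_sum_mul_add_eq_zero (binForm c z))]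
  simp only [Finset.sum_add_distrib, Finset.sum_const, Finset.card_univ, Fintype.card_prod,
    smul_eq_mul, Finset.mul_sum, mul_ite, mul_one, mul_zero, sq]

lemma exists_root_iff_of_card_ellFun_zeros_eq {c₁ c₂ : F}
    (h : Nat.card {x // ellFun c₁ x = 0} = Nat.card {x // ellFun c₂ x = 0}) :
    (∃ t : F, t ^ 2 + t + c₁ = 0) ↔ ∃ t : F, t ^ 2 + t + c₂ = 0 := by
  rw [← not_iff_not, ← card_binForm_zeros_eq_one_iff, ← card_binForm_zeros_eq_one_iff]
  rw [card_ellFun_zeros, card_ellFun_zeros, add_right_inj] at h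
  rw [Nat.eq_of_mul_eq_mul_left Fintype.card_pos h]

end Forms

section ArtinSchreier

variable (F : Type*) [Field F] [CharP F 2]

def artinSchreier : F →+ F where
  toFun t := t ^ 2 + t
  map_zero' := by simp
  map_add' x y := by linear_combination x * y * CharTwo.two_eq_zero (R := F)

variable {F}

lemma mem_range_artinSchreier {c : F} :
    c ∈ (artinSchreier F).range ↔ ∃ t : F, t ^ 2 + t + c = 0 := by
  simp only [AddMonoidHom.mem_range, CharTwo.add_eq_zero]
  rfl

lemma coe_ker_artinSchreier : ((artinSchreier F).ker : Set F) = {0, 1} := by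
  ext t
  simp only [SetLike.mem_coe, AddMonoidHom.mem_ker, Set.mem_insert_iff, Set.mem_singleton_iff]
  change t ^ 2 + t = 0 ↔ _
  rw [show t ^ 2 + t = t * (t + 1) by ring, mul_eq_zero, CharTwo.add_eq_zero]

lemma index_range_artinSchreier [Finite F] : (artinSchreier F).range.index = 2 := by
  have hker : Nat.card (artinSchreier F).ker = 2 := by
    rw [← SetLike.coe_sort_coe, coe_ker_artinSchreier, Nat.card_coe_set_eq]
    exact Set.ncard_pair zero_ne_one
  have h₁ := (artinSchreier F).ker.card_mul_index
  have h₂ := (artinSchreier F).range.card_mul_index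
  rw [hker, AddSubgroup.index_ker] at h₁
  have : 0 < Nat.card (artinSchreier F).range := Nat.card_pos
  nlinarith

end ArtinSchreier

theorem no_substitution_between_forms_up_to_scalar_general
    (F : Type*) [Field F] [Fintype F] (h : ℕ)
    (hcard : Fintype.card F = 2 ^ h)
    (δ b₁ b₂ : F) (hne : b₁ ≠ b₂) :
    ¬ ∃ (A : Matrix (Fin 4) (Fin 4) F) (μ₁ μ₂ : F), IsUnit A ∧
      μ₁ ≠ 0 ∧ μ₂ ≠ 0 ∧
      substMat A (ellForm δ) = C μ₁ * ellForm δ ∧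
      substMat A (ellForm (δ + b₁)) = C μ₂ * ellForm (δ + b₂) := by
  have : CharP F 2 := charP_of_card_eq_prime_pow hcard
  rintro ⟨A, μ₁, μ₂, hA, hμ₁, -, h₁, h₂⟩
  have hbij : Function.Bijective A.mulVec :=
    ⟨Matrix.mulVec_injective_iff_isUnit.mpr hA, Matrix.mulVec_surjective_iff_isUnit.mpr hA⟩
  have hpencil :=
    ellFun_pencil (ellFun_mulVec_of_substMat_eq h₁) (ellFun_mulVec_of_substMat_eq h₂)
  obtain ⟨a, ha⟩ := AddSubgroup.index_eq_two_iff.mp (index_range_artinSchreier (F := F))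
  obtain ⟨s, hs⟩ : ∃ s, s * (b₁ - b₂) = a := ⟨_, div_mul_cancel₀ a (sub_ne_zero.mpr hne)⟩
  have hshift : δ + s * b₂ + a = δ + s * b₁ := by linear_combination -hs
  have hxor := ha (δ + s * b₂)
  rw [hshift, mem_range_artinSchreier, mem_range_artinSchreier,
    exists_root_iff_of_card_ellFun_zeros_eq
      (card_zeros_eq_of_forall_eq_mul hbij hμ₁ (hpencil s))] at hxor
  exact (_root_.xor_self _).mp hxor

/-- For `Tr(δ) = 1` and distinct nonzero `b₁, b₂` of trace `0`, no invertible
linear substitution maps `X₁X₂+X₃²+X₃X₄+δX₄²` to a nonzero multiple of itself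
while mapping `X₁X₂+X₃²+X₃X₄+(δ+b₁)X₄²` to a nonzero multiple of
`X₁X₂+X₃²+X₃X₄+(δ+b₂)X₄²`. -/
theorem no_substitution_between_forms_up_to_scalar
    (F : Type*) [Field F] [Fintype F] (h : ℕ) (hh : 1 ≤ h)
    (hcard : Fintype.card F = 2 ^ h)
    (δ b₁ b₂ : F) (hδ : absTrace h δ = 1)
    (hb₁ : b₁ ≠ 0) (hb₂ : b₂ ≠ 0) (hne : b₁ ≠ b₂)
    (ht₁ : absTrace h b₁ = 0) (ht₂ : absTrace h b₂ = 0) :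
    ¬ ∃ (A : Matrix (Fin 4) (Fin 4) F) (μ₁ μ₂ : F), IsUnit A ∧
      μ₁ ≠ 0 ∧ μ₂ ≠ 0 ∧
      substMat A (ellForm δ) = C μ₁ * ellForm δ ∧
      substMat A (ellForm (δ + b₁)) = C μ₂ * ellForm (δ + b₂) :=
  no_substitution_between_forms_up_to_scalar_general F h hcard δ b₁ b₂ hne
end

section
/- Let X be a generalized quadratic set of type (SC) of Q⁺(5,q), q even, satisfying properties (1) and (2), with A₁ and A₂ as defined. Then no two points of A₁ ∪ A₂ lie in a common plane of Q⁺(5,q); in particular no two are collinear on the quadric, and A₁ ∪ A₂ is an ovoid of Q⁺(5,q) (meets every plane of the quadric in exactly one point). -/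
/-!
Two points of `A₁` in a plane are both the single point of `X` there; a point of `A₁` and a
point of `A₂` never share a plane, whose type would then be both (S) and (C); two points of
`A₂` in a plane are kernels of the same oval, and an oval has at most one kernel. Conversely
every plane contains a point of `A₁ ∪ A₂`: its point of `X` if it has type (S), otherwise the
kernel of its oval. That kernel exists because `q` is even: the `q + 1` lines through an
external point meet the oval in `q + 1` points, so an odd number of them are tangents; double
counting the tangents along a secant shows that each external point of a secant lies on exactly
one tangent, hence the meet of two tangents lies on no secant, and all lines through it are
tangents.
-/

/-- An abstract model of the point-line-plane geometry of the Klein quadric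
`Q⁺(5,q)`: points, lines and planes (all lines and planes being fully
contained in the quadric), where every plane with its lines is a projective
plane of order `q`, every line lies in a plane, there are `2(q+1)(q²+1)`
planes and every point lies on exactly `2(q+1)` planes. -/
structure KleinGeom (q : ℕ) where
  P : Type
  fin : Fintype P
  lines : Set (Set P)
  planes : Set (Set P)
  line_card : ∀ L ∈ lines, L.ncard = q + 1
  line_in_plane : ∀ L ∈ lines, ∃ π ∈ planes, L ⊆ π
  plane_card : ∀ π ∈ planes, π.ncard = q ^ 2 + q + 1
  plane_two_points : ∀ π ∈ planes, ∀ x ∈ π, ∀ y ∈ π, x ≠ y →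
    ∃! L, L ∈ lines ∧ L ⊆ π ∧ x ∈ L ∧ y ∈ L
  plane_point_lines : ∀ π ∈ planes, ∀ x ∈ π,
    {L | L ∈ lines ∧ L ⊆ π ∧ x ∈ L}.ncard = q + 1
  planes_card : planes.ncard = 2 * (q + 1) * (q ^ 2 + 1)
  point_planes : ∀ x : P, {π | π ∈ planes ∧ x ∈ π}.ncard = 2 * (q + 1)

variable {q : ℕ}

/-- An oval of the plane `π`: `q+1` points of `π`, no three collinear. -/
def KleinGeom.IsOval (G : KleinGeom q) (π O : Set G.P) : Prop :=
  O ⊆ π ∧ O.ncard = q + 1 ∧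
    ∀ L ∈ G.lines, L ⊆ π → (L ∩ O).ncard ≤ 2

/-- `k` is the kernel (nucleus) of the oval `O` of the plane `π`: every line
of `π` through `k` meets `O` in exactly one point. -/
def KleinGeom.IsKernel (G : KleinGeom q) (π O : Set G.P) (k : G.P) : Prop :=
  k ∈ π ∧ k ∉ O ∧ ∀ L ∈ G.lines, L ⊆ π → k ∈ L → (L ∩ O).ncard = 1

/-- A generalized quadratic set of type (SC): a point set meeting each plane
in a single point (type (S)) or an oval (type (C)), both types occurring. -/
def KleinGeom.IsGQS (G : KleinGeom q) (X : Set G.P) : Prop :=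
  (∀ π ∈ G.planes, (X ∩ π).ncard = 1 ∨ G.IsOval π (X ∩ π)) ∧
    (∃ π ∈ G.planes, (X ∩ π).ncard = 1) ∧
    (∃ π ∈ G.planes, G.IsOval π (X ∩ π))

/-- `A₁`: the points of `X` lying in some plane of type (S). -/
def KleinGeom.A1 (G : KleinGeom q) (X : Set G.P) : Set G.P :=
  {x | x ∈ X ∧ ∃ π ∈ G.planes, x ∈ π ∧ (X ∩ π).ncard = 1}

/-- `A₂`: the kernels of the oval sections `π ∩ X` over type-(C) planes. -/
def KleinGeom.A2 (G : KleinGeom q) (X : Set G.P) : Set G.P :=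
  {k | ∃ π ∈ G.planes, G.IsOval π (X ∩ π) ∧ G.IsKernel π (X ∩ π) k}

/-- Property (1): every plane through a point of `A₁` has type (S). -/
def KleinGeom.Prop1 (G : KleinGeom q) (X : Set G.P) : Prop :=
  ∀ π ∈ G.planes, ∀ x ∈ G.A1 X, x ∈ π → (X ∩ π).ncard = 1

/-- Property (2): every plane through a point `x ∈ A₂` has type (C) and `x`
is the kernel of its oval section. -/
def KleinGeom.Prop2 (G : KleinGeom q) (X : Set G.P) : Prop :=
  ∀ π ∈ G.planes, ∀ x ∈ G.A2 X, x ∈ π →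
    G.IsOval π (X ∩ π) ∧ G.IsKernel π (X ∩ π) x

namespace Finset

open scoped Classical in
theorem sum_ncard_inter_eq_sum_card_filter_mem {α : Type*} (𝓛 : Finset (Set α))
    (S : Finset α) :
    ∑ L ∈ 𝓛, (L ∩ ↑S).ncard = ∑ y ∈ S, #{L ∈ 𝓛 | y ∈ L} := by
  have hinter : ∀ L : Set α, L ∩ ↑S = ↑{y ∈ S | y ∈ L} := fun L => by
    ext y; simp [and_comm]
  simp_rw [hinter, Set.ncard_coe_finset]
  exact sum_card_bipartiteAbove_eq_sum_card_bipartiteBelow (s := 𝓛) (t := S) fun L y => y ∈ L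

theorem card_filter_eq_zero_add_sum {ι : Type*} {s : Finset ι} {f : ι → ℕ}
    (hf : ∀ i ∈ s, f i ≤ 1) : #{i ∈ s | f i = 0} + ∑ i ∈ s, f i = #s := by
  rw [Finset.card_filter, ← Finset.sum_add_distrib, Finset.card_eq_sum_ones]
  refine Finset.sum_congr rfl fun i hi => ?_
  have := hf i hi
  split_ifs <;> omega

theorem card_filter_eq_one_mod_two {ι : Type*} {s : Finset ι} {f : ι → ℕ}
    (hf : ∀ i ∈ s, f i ≤ 2) : #{i ∈ s | f i = 1} % 2 = (∑ i ∈ s, f i) % 2 := by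
  rw [Finset.card_filter, Finset.sum_nat_mod, Finset.sum_nat_mod s 2 f]
  congr 1
  refine Finset.sum_congr rfl fun i hi => ?_
  have := hf i hi
  interval_cases f i <;> simp

end Finset

namespace KleinGeom

attribute [local instance] KleinGeom.fin

open Finset
open scoped Classical

variable {G : KleinGeom q} {π O S L M T : Set G.P} {x y p a b k k' : G.P}

noncomputable def pencil (G : KleinGeom q) (π : Set G.P) (x : G.P) : Finset (Set G.P) :=
  {L | L ∈ G.lines ∧ L ⊆ π ∧ x ∈ L}

@[simp]
lemma mem_pencil : L ∈ G.pencil π x ↔ L ∈ G.lines ∧ L ⊆ π ∧ x ∈ L := by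
  simp [pencil]

lemma card_pencil (hπ : π ∈ G.planes) (hx : x ∈ π) : #(G.pencil π x) = q + 1 := by
  rw [← G.plane_point_lines π hπ x hx, ← Set.ncard_coe_finset]
  congr 1
  ext L
  rw [mem_coe, mem_pencil]
  rfl

lemma line_eq_of_mem_of_mem (hπ : π ∈ G.planes) (hL : L ∈ G.lines) (hLπ : L ⊆ π)
    (hM : M ∈ G.lines) (hMπ : M ⊆ π) (hxy : x ≠ y)
    (hxL : x ∈ L) (hyL : y ∈ L) (hxM : x ∈ M) (hyM : y ∈ M) : L = M :=
  (G.plane_two_points π hπ x (hLπ hxL) y (hLπ hyL) hxy).unique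
    ⟨hL, hLπ, hxL, hyL⟩ ⟨hM, hMπ, hxM, hyM⟩

lemma card_filter_pencil_mem (hπ : π ∈ G.planes) (hx : x ∈ π) (hy : y ∈ π)
    (hxy : x ≠ y) : #{L ∈ G.pencil π x | y ∈ L} = 1 := by
  obtain ⟨L, hL, huniq⟩ := G.plane_two_points π hπ x hx y hy hxy
  refine card_eq_one.mpr ⟨L, ?_⟩
  ext M
  simp only [mem_filter, mem_pencil, mem_singleton]
  constructor
  · rintro ⟨⟨h1, h2, h3⟩, h4⟩
    exact huniq M ⟨h1, h2, h3, h4⟩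
  · rintro rfl
    exact ⟨⟨hL.1, hL.2.1, hL.2.2.1⟩, hL.2.2.2⟩

lemma sum_ncard_inter_pencil (hπ : π ∈ G.planes) (hx : x ∈ π) (hS : S ⊆ π)
    (hxS : x ∉ S) : ∑ L ∈ G.pencil π x, (L ∩ S).ncard = S.ncard := by
  have h := sum_ncard_inter_eq_sum_card_filter_mem (G.pencil π x) S.toFinset
  rw [Set.coe_toFinset] at h
  rw [h, Set.ncard_eq_toFinset_card', card_eq_sum_ones]
  refine sum_congr rfl fun y hy => card_filter_pencil_mem hπ hx (hS ?_) ?_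
  · simpa using hy
  · rintro rfl; simp_all

lemma ncard_inter_eq_one (hπ : π ∈ G.planes) (hL : L ∈ G.lines) (hLπ : L ⊆ π)
    (hM : M ∈ G.lines) (hMπ : M ⊆ π) (hLM : L ≠ M) : (L ∩ M).ncard = 1 := by
  obtain ⟨x, hxM, hxL⟩ : ∃ x ∈ M, x ∉ L := by
    by_contra! hML
    exact hLM (Set.eq_of_subset_of_ncard_le hML
      (by rw [G.line_card L hL, G.line_card M hM])).symm
  have hsum : ∑ K ∈ G.pencil π x, (K ∩ L).ncard = ∑ K ∈ G.pencil π x, 1 := by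
    rw [sum_ncard_inter_pencil hπ (hMπ hxM) hLπ hxL, ← card_eq_sum_ones,
      card_pencil hπ (hMπ hxM), G.line_card L hL]
  have hle : ∀ K ∈ G.pencil π x, (K ∩ L).ncard ≤ 1 := by
    intro K hK
    rw [mem_pencil] at hK
    refine (Set.ncard_le_one_iff).mpr fun {y z} hy hz => ?_
    by_contra hyz
    have := line_eq_of_mem_of_mem hπ hK.1 hK.2.1 hL hLπ hyz hy.1 hz.1 hy.2 hz.2
    exact hxL (this ▸ hK.2.2)
  rw [Set.inter_comm]
  exact (sum_eq_sum_iff_of_le hle).mp hsum M (by simp [hM, hMπ, hxM])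

noncomputable def tangents (G : KleinGeom q) (π O : Set G.P) : Finset (Set G.P) :=
  {T | T ∈ G.lines ∧ T ⊆ π ∧ (T ∩ O).ncard = 1}

noncomputable def tangentsThrough (G : KleinGeom q) (π O : Set G.P) (x : G.P) :
    Finset (Set G.P) :=
  {T ∈ G.tangents π O | x ∈ T}

@[simp]
lemma mem_tangents :
    T ∈ G.tangents π O ↔ T ∈ G.lines ∧ T ⊆ π ∧ (T ∩ O).ncard = 1 := by
  simp [tangents]

@[simp]
lemma mem_tangentsThrough :
    T ∈ G.tangentsThrough π O x ↔ T ∈ G.tangents π O ∧ x ∈ T := by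
  simp [tangentsThrough]

lemma eq_of_mem_tangents (hT : T ∈ G.tangents π O) (ha : a ∈ T) (haO : a ∈ O) (hb : b ∈ T)
    (hbO : b ∈ O) : a = b :=
  (Set.ncard_le_one_iff).mp (mem_tangents.mp hT).2.2.le ⟨ha, haO⟩ ⟨hb, hbO⟩

lemma tangentsThrough_eq_filter_pencil :
    G.tangentsThrough π O x = {L ∈ G.pencil π x | (L ∩ O).ncard = 1} := by
  ext L
  simp only [mem_tangentsThrough, mem_tangents, mem_filter, mem_pencil]
  tauto

namespace IsOval

lemma card_tangentsThrough_of_mem (hπ : π ∈ G.planes) (hO : G.IsOval π O) (hp : p ∈ O) :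
    #(G.tangentsThrough π O p) = 1 := by
  -- the `q + 1` lines through `p` meet the other `q` points of `O` at most once each,
  -- so exactly one of them misses all of those points
  have hpπ := hO.1 hp
  have hdrop : ∀ L, p ∈ L → (L ∩ (O \ {p})).ncard + 1 = (L ∩ O).ncard := fun L hpL => by
    rw [← Set.inter_sdiff_assoc]
    exact Set.ncard_sdiff_singleton_add_one ⟨hpL, hp⟩
  have hcount := card_filter_eq_zero_add_sum (s := G.pencil π p)
    (f := fun L => (L ∩ (O \ {p})).ncard) fun L hL => by
      rw [mem_pencil] at hL
      have := hdrop L hL.2.2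
      have := hO.2.2 L hL.1 hL.2.1
      omega
  rw [sum_ncard_inter_pencil hπ hpπ (Set.sdiff_subset.trans hO.1) (by simp),
    Set.ncard_sdiff_singleton_of_mem hp, hO.2.1, card_pencil hπ hpπ] at hcount
  convert_to #{L ∈ G.pencil π p | (L ∩ (O \ {p})).ncard = 0} = 1
  · congr 1
    ext L
    simp only [mem_tangentsThrough, mem_tangents, mem_filter, mem_pencil]
    constructor
    · rintro ⟨⟨h1, h2, h3⟩, h4⟩
      have := hdrop L h4
      exact ⟨⟨h1, h2, h4⟩, by omega⟩
    · rintro ⟨⟨h1, h2, h3⟩, h4⟩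
      have := hdrop L h3
      exact ⟨⟨h1, h2, by omega⟩, h3⟩
  · omega

lemma odd_card_tangentsThrough (hq : Even q) (hπ : π ∈ G.planes) (hO : G.IsOval π O)
    (hx : x ∈ π) (hxO : x ∉ O) : Odd #(G.tangentsThrough π O x) := by
  rw [tangentsThrough_eq_filter_pencil, Nat.odd_iff,
    card_filter_eq_one_mod_two fun L hL => by
      rw [mem_pencil] at hL
      exact hO.2.2 L hL.1 hL.2.1,
    sum_ncard_inter_pencil hπ hx hO.1 hxO, hO.2.1]
  obtain ⟨m, rfl⟩ := hq
  omega

lemma card_tangents (hπ : π ∈ G.planes) (hO : G.IsOval π O) :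
    #(G.tangents π O) = q + 1 := by
  calc #(G.tangents π O) = ∑ T ∈ G.tangents π O, (T ∩ O).ncard := by
        rw [card_eq_sum_ones]
        exact sum_congr rfl fun T hT => (mem_tangents.mp hT).2.2.symm
    _ = ∑ p ∈ O.toFinset, #(G.tangentsThrough π O p) := by
        have h := sum_ncard_inter_eq_sum_card_filter_mem (G.tangents π O) O.toFinset
        rwa [Set.coe_toFinset] at h
    _ = ∑ p ∈ O.toFinset, 1 :=
        sum_congr rfl fun p hp => card_tangentsThrough_of_mem hπ hO (by simpa using hp)
    _ = q + 1 := by rw [← card_eq_sum_ones, ← Set.ncard_eq_toFinset_card', hO.2.1]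

lemma card_tangentsThrough_of_secant (hq : Even q) (hπ : π ∈ G.planes) (hO : G.IsOval π O)
    (hL : L ∈ G.lines) (hLπ : L ⊆ π) (hsec : (L ∩ O).ncard = 2) (hx : x ∈ L)
    (hxO : x ∉ O) :
    #(G.tangentsThrough π O x) = 1 := by
  -- Each of the `q + 1` tangents meets `L` once, and each point of `L ∩ O` is on one of them,
  -- so the `q - 1` points of `L \ O` lie on `q - 1` tangents in all, and on at least one each.
  have hall : ∑ y ∈ L.toFinset, #(G.tangentsThrough π O y) = q + 1 := by
    have h := sum_ncard_inter_eq_sum_card_filter_mem (G.tangents π O) L.toFinset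
    rw [Set.coe_toFinset] at h
    rw [← card_tangents hπ hO, card_eq_sum_ones]
    refine h.symm.trans (sum_congr rfl fun T hT => ?_)
    rw [mem_tangents] at hT
    exact ncard_inter_eq_one hπ hT.1 hT.2.1 hL hLπ (by rintro rfl; omega)
  have hcard_on : #{y ∈ L.toFinset | y ∈ O} = 2 := by
    rw [← hsec, Set.ncard_eq_toFinset_card']
    congr 1
    ext y
    simp
  have hcard_off : #{y ∈ L.toFinset | y ∉ O} = q - 1 := by
    have := card_filter_add_card_filter_not (s := L.toFinset) (· ∈ O)
    rw [hcard_on, ← Set.ncard_eq_toFinset_card', G.line_card L hL] at this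
    omega
  have hsum_on : ∑ y ∈ L.toFinset with y ∈ O, #(G.tangentsThrough π O y) = 2 := by
    rw [← hcard_on, card_eq_sum_ones]
    exact sum_congr rfl fun y hy =>
      card_tangentsThrough_of_mem hπ hO (mem_filter.mp hy).2
  have hsum_off : ∑ y ∈ L.toFinset with y ∉ O, #(G.tangentsThrough π O y)
      = ∑ y ∈ L.toFinset with y ∉ O, 1 := by
    have := sum_filter_add_sum_filter_not L.toFinset (· ∈ O)
      fun y => #(G.tangentsThrough π O y)
    rw [← card_eq_sum_ones, hcard_off]
    omega
  have hpos : ∀ y ∈ L.toFinset.filter (· ∉ O), 1 ≤ #(G.tangentsThrough π O y) := by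
    intro y hy
    simp only [mem_filter, Set.mem_toFinset] at hy
    exact (odd_card_tangentsThrough hq hπ hO (hLπ hy.1) hy.2).pos
  exact ((sum_eq_sum_iff_of_le hpos).mp hsum_off.symm x (by simp [hx, hxO])).symm

lemma exists_tangent_mem (hπ : π ∈ G.planes) (hO : G.IsOval π O) (hp : p ∈ O) :
    ∃ T ∈ G.tangents π O, p ∈ T := by
  obtain ⟨T, hT⟩ := card_pos.mp (card_tangentsThrough_of_mem hπ hO hp).ge
  exact ⟨T, (mem_tangentsThrough.mp hT).1, (mem_tangentsThrough.mp hT).2⟩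

lemma exists_isKernel (hq : Even q) (hq0 : 0 < q) (hπ : π ∈ G.planes) (hO : G.IsOval π O) :
    ∃ k, G.IsKernel π O k := by
  obtain ⟨a, haO, b, hbO, hab⟩ :=
    (Set.one_lt_ncard (Set.toFinite O)).mp (by rw [hO.2.1]; omega)
  obtain ⟨Ta, hTa, haTa⟩ := exists_tangent_mem hπ hO haO
  obtain ⟨Tb, hTb, hbTb⟩ := exists_tangent_mem hπ hO hbO
  have hTab : Ta ≠ Tb := by
    rintro rfl
    exact hab (eq_of_mem_tangents hTa haTa haO hbTb hbO)
  obtain ⟨N, hN⟩ := Set.ncard_eq_one.mp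
    (ncard_inter_eq_one hπ (mem_tangents.mp hTa).1 (mem_tangents.mp hTa).2.1
      (mem_tangents.mp hTb).1 (mem_tangents.mp hTb).2.1 hTab)
  have hNTab : N ∈ Ta ∩ Tb := hN ▸ rfl
  have hNπ : N ∈ π := (mem_tangents.mp hTa).2.1 hNTab.1
  have hNO : N ∉ O := fun hNO => hab
    ((eq_of_mem_tangents hTa haTa haO hNTab.1 hNO).trans
      (eq_of_mem_tangents hTb hNTab.2 hNO hbTb hbO))
  have htwo : 1 < #(G.tangentsThrough π O N) :=
    one_lt_card.mpr ⟨Ta, mem_tangentsThrough.mpr ⟨hTa, hNTab.1⟩,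
      Tb, mem_tangentsThrough.mpr ⟨hTb, hNTab.2⟩, hTab⟩
  have hle : ∀ M ∈ G.pencil π N, (M ∩ O).ncard ≤ 1 := by
    intro M hM
    rw [mem_pencil] at hM
    by_contra! hsec
    have := card_tangentsThrough_of_secant hq hπ hO hM.1 hM.2.1
      (le_antisymm (hO.2.2 M hM.1 hM.2.1) hsec) hM.2.2 hNO
    omega
  have hsum : ∑ M ∈ G.pencil π N, (M ∩ O).ncard = ∑ M ∈ G.pencil π N, 1 := by
    rw [sum_ncard_inter_pencil hπ hNπ hO.1 hNO, ← card_eq_sum_ones, card_pencil hπ hNπ,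
      hO.2.1]
  exact ⟨N, hNπ, hNO, fun M hM hMπ hNM =>
    (sum_eq_sum_iff_of_le hle).mp hsum M (by simp [hM, hMπ, hNM])⟩

lemma isKernel_unique (hq0 : 0 < q) (hπ : π ∈ G.planes) (hO : G.IsOval π O)
    (hk : G.IsKernel π O k) (hk' : G.IsKernel π O k') : k = k' := by
  by_contra hne
  obtain ⟨K, hK, -⟩ := G.plane_two_points π hπ k hk.1 k' hk'.1 hne
  obtain ⟨p, hpO, hpK⟩ := Set.exists_mem_notMem_of_ncard_lt_ncard (s := K ∩ O) (t := O)
    (by rw [hk.2.2 K hK.1 hK.2.1 hK.2.2.1, hO.2.1]; omega)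
  have tangent_join :
      ∀ {k}, G.IsKernel π O k → ∃ M ∈ G.tangentsThrough π O p, k ∈ M := by
    intro k hk
    obtain ⟨M, hM, -⟩ :=
      G.plane_two_points π hπ k hk.1 p (hO.1 hpO) (by rintro rfl; exact hk.2.1 hpO)
    exact ⟨M, by simp [hM.1, hM.2.1, hM.2.2.2, hk.2.2 M hM.1 hM.2.1 hM.2.2.1], hM.2.2.1⟩
  obtain ⟨M, hM, hkM⟩ := tangent_join hk
  obtain ⟨M', hM', hk'M'⟩ := tangent_join hk'
  have hMM' : M = M' :=
    card_le_one.mp (card_tangentsThrough_of_mem hπ hO hpO).le M hM M' hM'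
  have hM_lines := mem_tangents.mp (mem_tangentsThrough.mp hM).1
  have hMK : M = K := line_eq_of_mem_of_mem hπ hM_lines.1 hM_lines.2.1 hK.1 hK.2.1 hne hkM
    (hMM' ▸ hk'M') hK.2.2.1 hK.2.2.2
  exact hpK ⟨hMK ▸ (mem_tangentsThrough.mp hM).2, hpO⟩

end IsOval

variable {X : Set G.P}

lemma eq_of_mem_A1_union_A2 (hq0 : 0 < q) (h1 : G.Prop1 X) (h2 : G.Prop2 X)
    (hπ : π ∈ G.planes) (hx : x ∈ G.A1 X ∪ G.A2 X) (hy : y ∈ G.A1 X ∪ G.A2 X)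
    (hxπ : x ∈ π) (hyπ : y ∈ π) : x = y := by
  rcases hx with hx | hx <;> rcases hy with hy | hy
  · exact (Set.ncard_le_one_iff).mp (h1 π hπ x hx hxπ).le ⟨hx.1, hxπ⟩ ⟨hy.1, hyπ⟩
  · have := (h2 π hπ y hy hyπ).1.2.1
    have := h1 π hπ x hx hxπ
    omega
  · have := (h2 π hπ x hx hxπ).1.2.1
    have := h1 π hπ y hy hyπ
    omega
  · have hx' := h2 π hπ x hx hxπ
    exact IsOval.isKernel_unique hq0 hπ hx'.1 hx'.2 (h2 π hπ y hy hyπ).2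

lemma exists_mem_A1_union_A2 (hq : Even q) (hq0 : 0 < q) (hX : G.IsGQS X)
    (hπ : π ∈ G.planes) : ∃ z ∈ G.A1 X ∪ G.A2 X, z ∈ π := by
  rcases hX.1 π hπ with hS | hC
  · obtain ⟨z, hz⟩ := Set.ncard_eq_one.mp hS
    have hzXπ : z ∈ X ∩ π := hz ▸ rfl
    exact ⟨z, Or.inl ⟨hzXπ.1, π, hπ, hzXπ.2, hS⟩, hzXπ.2⟩
  · obtain ⟨k, hk⟩ := IsOval.exists_isKernel hq hq0 hπ hC
    exact ⟨k, Or.inr ⟨π, hπ, hC, hk⟩, hk.1⟩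

end KleinGeom

/-- For a generalized quadratic set of type (SC) on `Q⁺(5,q)`, `q` even,
satisfying properties (1) and (2): no two points of `A₁ ∪ A₂` lie in a common
plane, in particular no two are collinear, and `A₁ ∪ A₂` is an ovoid (it meets
every plane of the quadric in exactly one point). -/
theorem gqs_ovoid (q : ℕ) (hq : Even q) (hq2 : 2 ≤ q)
    (G : KleinGeom q) (X : Set G.P)
    (hX : G.IsGQS X) (h1 : G.Prop1 X) (h2 : G.Prop2 X) :
    (∀ π ∈ G.planes, ∀ x ∈ G.A1 X ∪ G.A2 X, ∀ y ∈ G.A1 X ∪ G.A2 X,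
      x ∈ π → y ∈ π → x = y) ∧
    (∀ L ∈ G.lines, ∀ x ∈ G.A1 X ∪ G.A2 X, ∀ y ∈ G.A1 X ∪ G.A2 X,
      x ∈ L → y ∈ L → x = y) ∧
    (∀ π ∈ G.planes, ((G.A1 X ∪ G.A2 X) ∩ π).ncard = 1) := by
  have hq0 : 0 < q := by omega
  have hplane : ∀ π ∈ G.planes, ∀ x ∈ G.A1 X ∪ G.A2 X, ∀ y ∈ G.A1 X ∪ G.A2 X,
      x ∈ π → y ∈ π → x = y := fun π hπ x hx y hy =>
    KleinGeom.eq_of_mem_A1_union_A2 hq0 h1 h2 hπ hx hy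
  refine ⟨hplane, fun L hL x hx y hy hxL hyL => ?_, fun π hπ => ?_⟩
  · obtain ⟨π, hπ, hLπ⟩ := G.line_in_plane L hL
    exact hplane π hπ x hx y hy (hLπ hxL) (hLπ hyL)
  · obtain ⟨z, hz, hzπ⟩ := KleinGeom.exists_mem_A1_union_A2 hq hq0 hX hπ
    exact Set.ncard_eq_one.mpr ⟨z, Set.eq_singleton_iff_unique_mem.mpr
      ⟨⟨hz, hzπ⟩, fun w hw => hplane π hπ w hw.1 z hz hw.2 hzπ⟩⟩
end
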